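/- arXiv:1607.05515 — 5 statements merged into one kernel-verified Lean document; each statement's English description precedes it below -/
import Mathlib

section
/- Clopen determinacy holds for games on any set: for every nonempty wellfounded tree T on a set X, either Player I or Player II has a winning strategy in the game on T. -/
universe u

/-- `T` is a tree on `X`: a set of finite sequences closed under initial segments. -/
def IsTree {X : Type u} (T : Set (List X)) : Prop :=
  ∀ s t : List X, s <+: t → t ∈ T → s ∈ T

/-- `T` is wellfounded: there is no infinite branch through `T`. -/
def IsWF {X : Type u} (T : Set (List X)) : Prop :=
  ¬ ∃ x : ℕ → X, ∀ n : ℕ, (List.ofFn fun i : Fin (n + 1) => x i) ∈ T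

/-- `s` is a terminal node of `T`: no one-step extension of `s` lies in `T`. -/
def TerminalIn {X : Type u} (T : Set (List X)) (s : List X) : Prop :=
  ∀ x : X, s ++ [x] ∉ T

/-- A strategy for Player I in the game on `T`: a subtree `S ⊆ T` containing the
root such that at every node of even length that is nonterminal in `T` exactly one
move is allowed, and at every node of odd length all moves staying in `T` are allowed. -/
def IsStrategyI {X : Type u} (T S : Set (List X)) : Prop :=
  S ⊆ T ∧ IsTree S ∧ [] ∈ S ∧
  (∀ s ∈ S, Even s.length → (∃ x : X, s ++ [x] ∈ T) → ∃! x : X, s ++ [x] ∈ S) ∧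
  (∀ s ∈ S, Odd s.length → ∀ x : X, (s ++ [x] ∈ S ↔ s ++ [x] ∈ T))

/-- A strategy for Player II in the game on `T`: defined as for Player I with the
parities exchanged. -/
def IsStrategyII {X : Type u} (T S : Set (List X)) : Prop :=
  S ⊆ T ∧ IsTree S ∧ [] ∈ S ∧
  (∀ s ∈ S, Odd s.length → (∃ x : X, s ++ [x] ∈ T) → ∃! x : X, s ++ [x] ∈ S) ∧
  (∀ s ∈ S, Even s.length → ∀ x : X, (s ++ [x] ∈ S ↔ s ++ [x] ∈ T))

/-- A strategy `S` for Player I (in a wellfounded game) is winning if every node of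
`S` that is terminal in `T` has odd length. -/
def WinningI {X : Type u} (T S : Set (List X)) : Prop :=
  ∀ s ∈ S, TerminalIn T s → Odd s.length

/-- A strategy `S` for Player II (in a wellfounded game) is winning if every node of
`S` that is terminal in `T` has even length. -/
def WinningII {X : Type u} (T S : Set (List X)) : Prop :=
  ∀ s ∈ S, TerminalIn T s → Even s.length

namespace CD

variable {X : Type u}

def Ext (T : Set (List X)) : List X → List X → Prop :=
  fun t s => (∃ x, t = s ++ [x]) ∧ t ∈ T

lemma prefix_snoc {s t : List X} {x : X} (h : t <+: s ++ [x]) :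
    t = s ++ [x] ∨ t <+: s := by
  rcases h with ⟨u, hu⟩
  rcases u.eq_nil_or_concat with rfl | ⟨v, y, rfl⟩
  · left; simpa using hu
  · right
    rw [List.concat_eq_append, ← List.append_assoc] at hu
    have := List.append_inj' hu rfl
    exact ⟨v, this.1⟩

lemma snoc_inj {s t : List X} {x y : X} (h : s ++ [x] = t ++ [y]) :
    s = t ∧ x = y := by
  have := List.append_inj' h rfl
  exact ⟨this.1, by simpa using this.2⟩

lemma ext_wf (T : Set (List X)) (hT : IsTree T) (hwf : IsWF T) :
    WellFounded (Ext T) := by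
  by_contra hw
  have hstep : ∀ s, ¬ Acc (Ext T) s → ∃ t, Ext T t s ∧ ¬ Acc (Ext T) t := by
    intro s hs
    by_contra h
    push_neg at h
    exact hs (Acc.intro s fun t ht => h t ht)
  obtain ⟨a, ha⟩ : ∃ a, ¬ Acc (Ext T) a := by
    by_contra h; push_neg at h; exact hw ⟨h⟩
  let c : ℕ → {s : List X // ¬ Acc (Ext T) s} := fun n =>
    Nat.rec ⟨a, ha⟩ (fun _ p => ⟨(hstep p.1 p.2).choose,
      (hstep p.1 p.2).choose_spec.2⟩) n
  have hc : ∀ n, Ext T (c (n + 1)).1 (c n).1 := fun n =>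
    (hstep (c n).1 (c n).2).choose_spec.1
  set d : ℕ → List X := fun n => (c (n + 1)).1 with hd
  have hdT : ∀ n, d n ∈ T := fun n => (hc n).2
  have hde : ∀ n, ∃ x, d (n + 1) = d n ++ [x] := fun n => (hc (n + 1)).1
  have hdlen : ∀ n, (d n).length = (d 0).length + n := by
    intro n
    induction n with
    | zero => rfl
    | succ n ih =>
      obtain ⟨x, hx⟩ := hde n
      rw [hx, List.length_append, ih]
      simp; ring
  have hdpre : ∀ m n, m ≤ n → d m <+: d n := by
    intro m n h
    induction n with
    | zero => simp [Nat.le_zero.1 h]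
    | succ n ih =>
      rcases Nat.lt_or_ge m (n+1) with h' | h'
      · obtain ⟨x, hx⟩ := hde n
        have : d n <+: d (n+1) := ⟨[x], hx.symm⟩
        exact (ih (Nat.lt_succ_iff.1 h')).trans this
      · have : m = n + 1 := le_antisymm h h'
        simp [this]
  have hL : 1 ≤ (d 0).length := by
    obtain ⟨x, hx⟩ := (hc 0).1
    have h1 : d 0 = (c 0).1 ++ [x] := hx
    rw [h1]; simp
  have hlt : ∀ n, n < (d n).length := fun n => by
    rw [hdlen n]; omega
  refine hwf ⟨fun n => (d n)[n]'(hlt n), fun n => ?_⟩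
  have heq : (List.ofFn fun i : Fin (n + 1) => (d i)[(i : ℕ)]'(hlt i)) = (d n).take (n+1) := by
    apply List.ext_getElem
    · simp [hdlen n]; omega
    · intro i h1 h2
      simp only [List.getElem_ofFn, List.getElem_take]
      have hi : i ≤ n := by simpa using Nat.lt_succ_iff.1 (by simpa using h1)
      exact (hdpre i n hi).getElem _
  rw [heq]
  exact hT _ _ (List.take_prefix _ _) (hdT n)

noncomputable def WinA (T : Set (List X)) (h : WellFounded (Ext T)) : List X → Prop :=
  h.fix (fun s IH =>
    if Even s.length then ∃ x, ∃ hx : s ++ [x] ∈ T, IH (s ++ [x]) ⟨⟨x, rfl⟩, hx⟩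
    else ∀ x, ∀ hx : s ++ [x] ∈ T, IH (s ++ [x]) ⟨⟨x, rfl⟩, hx⟩)

lemma WinA_even {T : Set (List X)} {h : WellFounded (Ext T)} {s : List X}
    (he : Even s.length) :
    WinA T h s ↔ ∃ x, s ++ [x] ∈ T ∧ WinA T h (s ++ [x]) := by
  rw [WinA, WellFounded.fix_eq, if_pos he]
  simp only [exists_prop]

lemma WinA_odd {T : Set (List X)} {h : WellFounded (Ext T)} {s : List X}
    (ho : ¬ Even s.length) :
    WinA T h s ↔ ∀ x, s ++ [x] ∈ T → WinA T h (s ++ [x]) := by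
  rw [WinA, WellFounded.fix_eq, if_neg ho]

inductive Str (T : Set (List X)) (P E : List X → Prop) : List X → Prop
  | nil : Str T P E []
  | move (s : List X) (hs : Str T P E s) (he : E s)
      (h : ∃ x, s ++ [x] ∈ T ∧ P (s ++ [x])) : Str T P E (s ++ [h.choose])
  | resp (s : List X) (x : X) (hs : Str T P E s) (ho : ¬ E s)
      (h : s ++ [x] ∈ T) : Str T P E (s ++ [x])

variable {T : Set (List X)} {P E : List X → Prop}

lemma Str_subset (h0 : [] ∈ T) : ∀ {s}, Str T P E s → s ∈ T := by
  intro s hs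
  induction hs with
  | nil => exact h0
  | move s hs he h ih => exact h.choose_spec.1
  | resp s x hs ho h ih => exact h

lemma Str_P (h0 : P [])
    (hR : ∀ s, P s → ¬ E s → ∀ x, s ++ [x] ∈ T → P (s ++ [x])) :
    ∀ {s}, Str T P E s → P s := by
  intro s hs
  induction hs with
  | nil => exact h0
  | move s hs he h ih => exact h.choose_spec.2
  | resp s x hs ho h ih => exact hR s ih ho x h

lemma Str_tree : IsTree (setOf (Str T P E)) := by
  have : ∀ s, Str T P E s → ∀ t, t <+: s → Str T P E t := by
    intro s hs
    induction hs with
    | nil =>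
      intro t ht
      rw [List.prefix_nil.1 ht]; exact Str.nil
    | move s hs he h ih =>
      intro t ht
      rcases prefix_snoc ht with rfl | ht'
      · exact Str.move s hs he h
      · exact ih t ht'
    | resp s x hs ho h ih =>
      intro t ht
      rcases prefix_snoc ht with rfl | ht'
      · exact Str.resp s x hs ho h
      · exact ih t ht'
  exact fun s t hst ht => this t ht s hst

lemma Str_inv {t : List X} (ht : Str T P E t) :
    t = [] ∨ ∃ s, Str T P E s ∧
      ((E s ∧ ∃ h : ∃ x, s ++ [x] ∈ T ∧ P (s ++ [x]), t = s ++ [h.choose]) ∨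
       (¬ E s ∧ ∃ x, s ++ [x] ∈ T ∧ t = s ++ [x])) := by
  cases ht with
  | nil => exact Or.inl rfl
  | move s hs he h => exact Or.inr ⟨s, hs, Or.inl ⟨he, h, rfl⟩⟩
  | resp s x hs ho h => exact Or.inr ⟨s, hs, Or.inr ⟨ho, x, h, rfl⟩⟩

lemma Str_unique {s : List X} (hs : Str T P E s) (he : E s)
    (h : ∃ x, s ++ [x] ∈ T ∧ P (s ++ [x])) :
    ∃! x, Str T P E (s ++ [x]) := by
  refine ⟨h.choose, Str.move s hs he h, ?_⟩
  intro y hy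
  rcases Str_inv hy with h0 | ⟨s', hs', ⟨he', h', heq⟩ | ⟨ho', x', hx', heq⟩⟩
  · exact absurd h0 (by simp)
  · obtain ⟨rfl, rfl⟩ := snoc_inj heq
    rfl
  · obtain ⟨rfl, rfl⟩ := snoc_inj heq
    exact absurd he ho'

end CD

/-- Clopen determinacy for games on any set `X`: for every nonempty wellfounded tree
`T` on `X`, either Player I or Player II has a winning strategy in the game on `T`. -/
theorem clopen_determinacy {X : Type u} (T : Set (List X))
    (hT : IsTree T) (hwf : IsWF T) (hne : T.Nonempty) :
    (∃ S : Set (List X), IsStrategyI T S ∧ WinningI T S) ∨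
    (∃ S : Set (List X), IsStrategyII T S ∧ WinningII T S) := by
    classical
  have h0 : [] ∈ T := hT [] hne.choose (List.nil_prefix) hne.choose_spec
  have hwfE := CD.ext_wf T hT hwf
  by_cases hA : CD.WinA T hwfE []
  · left
    have hP : ∀ {s}, CD.Str T (CD.WinA T hwfE) (fun s => Even s.length) s →
        CD.WinA T hwfE s :=
      CD.Str_P hA fun s hPs ho x hx => (CD.WinA_odd ho).1 hPs x hx
    refine ⟨setOf (CD.Str T (CD.WinA T hwfE) (fun s => Even s.length)),
      ⟨fun s hs => CD.Str_subset h0 hs, CD.Str_tree, CD.Str.nil, ?_, ?_⟩, ?_⟩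
    · intro s hs he _
      exact CD.Str_unique hs he ((CD.WinA_even he).1 (hP hs))
    · intro s hs ho x
      exact ⟨fun h => CD.Str_subset h0 h,
        fun h => CD.Str.resp s x hs (Nat.not_even_iff_odd.2 ho) h⟩
    · intro s hs hterm
      rw [← Nat.not_even_iff_odd]
      intro he
      obtain ⟨x, hx, -⟩ := (CD.WinA_even he).1 (hP hs)
      exact hterm x hx
  · right
    have hstep : ∀ s, ¬ CD.WinA T hwfE s → Odd s.length →
        ∃ x, s ++ [x] ∈ T ∧ ¬ CD.WinA T hwfE (s ++ [x]) := by
      intro s hPs ho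
      have := (CD.WinA_odd (Nat.not_even_iff_odd.2 ho)).not.1 hPs
      push_neg at this
      exact this
    have hP : ∀ {s}, CD.Str T (fun s => ¬ CD.WinA T hwfE s) (fun s => Odd s.length) s →
        ¬ CD.WinA T hwfE s := by
      refine CD.Str_P hA fun s hPs hne' x hx hAx => ?_
      exact hPs ((CD.WinA_even (Nat.not_odd_iff_even.1 hne')).2 ⟨x, hx, hAx⟩)
    refine ⟨setOf (CD.Str T (fun s => ¬ CD.WinA T hwfE s) (fun s => Odd s.length)),
      ⟨fun s hs => CD.Str_subset h0 hs, CD.Str_tree, CD.Str.nil, ?_, ?_⟩, ?_⟩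
    · intro s hs ho _
      exact CD.Str_unique hs ho (hstep s (hP hs) ho)
    · intro s hs he x
      exact ⟨fun h => CD.Str_subset h0 h,
        fun h => CD.Str.resp s x hs (Nat.not_odd_iff_even.2 he) h⟩
    · intro s hs hterm
      by_contra he
      exact hP hs ((CD.WinA_odd he).2 fun x hx => absurd hx (hterm x))
end

section
/- Let T be a nonempty wellfounded tree on a set X and let σ : T → {0,1} be the unique function satisfying σ(s) = 0 iff there exists x ∈ X with s⌢⟨x⟩ ∈ T and σ(s⌢⟨x⟩) = 1. If σ(⟨⟩) = 0 then Player I has a winning strategy in the game on T, and if σ(⟨⟩) = 1 then Player II has a winning strategy in the game on T. -/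
universe u

/-- `σ : T → {0,1}` (with `0 = false`, `1 = true`) satisfies: `σ(s) = 0` iff there
is `x ∈ X` with `s⌢⟨x⟩ ∈ T` and `σ(s⌢⟨x⟩) = 1`. -/
def SigmaEq {X : Type u} (T : Set (List X)) (σ : List X → Bool) : Prop :=
  ∀ s ∈ T, (σ s = false ↔ ∃ x : X, s ++ [x] ∈ T ∧ σ (s ++ [x]) = true)

theorem strat_aux {X : Type u} (T : Set (List X)) (hT : IsTree T) (h0 : [] ∈ T)
    (σ : List X → Bool) (hσ : SigmaEq T σ) (E : ℕ → Prop)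
    (hE : ∀ n, E (n + 1) ↔ ¬ E n) (hE0 : σ [] = false ↔ E 0) :
    ∃ S : Set (List X), S ⊆ T ∧ IsTree S ∧ [] ∈ S ∧
      (∀ s ∈ S, E s.length → (∃ x : X, s ++ [x] ∈ T) → ∃! x : X, s ++ [x] ∈ S) ∧
      (∀ s ∈ S, ¬ E s.length → ∀ x : X, (s ++ [x] ∈ S ↔ s ++ [x] ∈ T)) ∧
      (∀ s ∈ S, TerminalIn T s → ¬ E s.length) := by
  classical
  set f : List X → Option X := fun s =>
    if h : ∃ x, s ++ [x] ∈ T ∧ σ (s ++ [x]) = true then some h.choose else none with hf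
  set S : Set (List X) :=
    {s | s ∈ T ∧ ∀ k, k < s.length → E k → s[k]? = f (s.take k)} with hS
  have hsub : S ⊆ T := fun s hs => hs.1
  have htree : IsTree S := by
    intro s t hpre ht
    obtain ⟨u, rfl⟩ := hpre
    refine ⟨hT s (s ++ u) (List.prefix_append s u) ht.1, fun k hk hEk => ?_⟩
    have h1 := ht.2 k (by simp; omega) hEk
    rwa [List.getElem?_append_left hk, List.take_append_of_le_length hk.le] at h1
  -- invariant
  have inv : ∀ s, s ∈ S → (σ s = false ↔ E s.length) := by
    intro s
    induction s using List.reverseRecOn with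
    | nil => intro _; simpa using hE0
    | append_singleton t x IH =>
      intro hs
      have htS : t ∈ S := htree t (t ++ [x]) (List.prefix_append t [x]) hs
      have htT : t ∈ T := htS.1
      have hlen : (t ++ [x]).length = t.length + 1 := by simp
      rw [hlen, hE t.length]
      by_cases hEt : E t.length
      · -- chosen move: σ (t ++ [x]) = true
        have h1 := hs.2 t.length (by simp) hEt
        rw [List.getElem?_concat_length, List.take_left] at h1
        rw [hf] at h1
        simp only at h1
        split at h1
        · next h =>
          have := h.choose_spec
          rw [Option.some.injEq] at h1
          rw [← h1] at this
          simp [this.2, hEt]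
        · simp at h1
      · -- opponent move: σ t = true so σ (t ++ [x]) = false
        have hσt : σ t = true := by
          rcases Bool.eq_false_or_eq_true (σ t) with h | h
          · exact h
          · exact absurd ((IH htS).mp h) hEt
        have : ¬ σ (t ++ [x]) = true := by
          intro hx
          have : σ t = false := (hσ t htT).mpr ⟨x, hs.1, hx⟩
          simp [this] at hσt
        simp [Bool.eq_false_iff.mpr (by simpa using this), hEt]
  refine ⟨S, hsub, htree, ⟨h0, by simp⟩, ?_, ?_, ?_⟩
  · -- mover's positions
    intro s hs hEs _
    have hσs : σ s = false := (inv s hs).mpr hEs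
    obtain ⟨x, hxT, hxσ⟩ := (hσ s hs.1).mp hσs
    have hex : ∃ x, s ++ [x] ∈ T ∧ σ (s ++ [x]) = true := ⟨x, hxT, hxσ⟩
    have hfs : f s = some hex.choose := by rw [hf]; simp [hex]
    have hmem : ∀ y : X, s ++ [y] ∈ S ↔ y = hex.choose := by
      intro y
      constructor
      · intro hy
        have h1 := hy.2 s.length (by simp) hEs
        rw [List.getElem?_concat_length, List.take_left, hfs] at h1
        exact Option.some.injEq _ _ ▸ h1
      · rintro rfl
        refine ⟨hex.choose_spec.1, fun k hk hEk => ?_⟩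
        simp only [List.length_append, List.length_singleton] at hk
        rcases Nat.lt_succ_iff_lt_or_eq.mp hk with hk' | rfl
        · rw [List.getElem?_append_left hk', List.take_append_of_le_length hk'.le]
          exact hs.2 k hk' hEk
        · rw [List.getElem?_concat_length, List.take_left, hfs]
    exact ⟨hex.choose, (hmem _).mpr rfl, fun y hy => (hmem y).mp hy⟩
  · -- opponent's positions
    intro s hs hEs x
    constructor
    · exact fun h => h.1
    · intro hxT
      refine ⟨hxT, fun k hk hEk => ?_⟩
      simp only [List.length_append, List.length_singleton] at hk
      rcases Nat.lt_succ_iff_lt_or_eq.mp hk with hk' | rfl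
      · rw [List.getElem?_append_left hk', List.take_append_of_le_length hk'.le]
        exact hs.2 k hk' hEk
      · exact absurd hEk hEs
  · -- winning
    intro s hs hterm hEs
    obtain ⟨x, hxT, _⟩ := (hσ s hs.1).mp ((inv s hs).mpr hEs)
    exact hterm x hxT

/-- Let `T` be a nonempty wellfounded tree on `X` and `σ` the unique `{0,1}`-valued
function with `σ(s) = 0` iff some one-step extension of `s` in `T` has `σ`-value `1`.
If `σ(⟨⟩) = 0` then Player I has a winning strategy in the game on `T`, and if
`σ(⟨⟩) = 1` then Player II has a winning strategy. -/
theorem sigma_gives_winning_strategy {X : Type u} (T : Set (List X))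
    (hT : IsTree T) (hwf : IsWF T) (hne : T.Nonempty)
    (σ : List X → Bool) (hσ : SigmaEq T σ) :
    (σ [] = false → ∃ S : Set (List X), IsStrategyI T S ∧ WinningI T S) ∧
    (σ [] = true → ∃ S : Set (List X), IsStrategyII T S ∧ WinningII T S) := by
  obtain ⟨t, ht⟩ := hne
  have h0 : [] ∈ T := hT [] t (List.nil_prefix) ht
  constructor
  · intro hroot
    obtain ⟨S, h1, h2, h3, h4, h5, h6⟩ :=
      strat_aux T hT h0 σ hσ Even (fun n => Nat.even_add_one) (by simp [hroot])
    exact ⟨S, ⟨h1, h2, h3, h4,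
      fun s hs hodd x => h5 s hs (Nat.not_even_iff_odd.mpr hodd) x⟩,
      fun s hs hterm => Nat.not_even_iff_odd.mp (h6 s hs hterm)⟩
  · intro hroot
    obtain ⟨S, h1, h2, h3, h4, h5, h6⟩ :=
      strat_aux T hT h0 σ hσ Odd
        (fun n => by rw [Nat.odd_add_one, Nat.not_odd_iff_even]) (by simp [hroot])
    exact ⟨S, ⟨h1, h2, h3, h4,
      fun s hs heven x => h5 s hs (Nat.not_odd_iff_even.mpr heven) x⟩,
      fun s hs hterm => Nat.not_odd_iff_even.mp (h6 s hs hterm)⟩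
end

section
/- Let T be a wellfounded tree on a set X. Any two partial winning strategies τ₁, τ₂ on T agree on the intersection of their domains: if τ₁(s) and τ₂(s) are both defined for s ∈ T, then τ₁(s) = τ₂(s). -/
universe u

/-- A partial winning strategy on `T`: a partial function `τ : T ⇀ {0,1}`
(`0 = false`, `1 = true`) such that (i) if `τ(s) = 0` then some one-step extension
of `s` in `T` has `τ`-value `1`, and (ii) if `τ(s) = 1` then every one-step
extension of `s` in `T` has `τ`-value defined and equal to `0`. -/
def IsPWS {X : Type u} (T : Set (List X)) (τ : List X → Option Bool) : Prop :=
  (∀ s : List X, (τ s).isSome → s ∈ T) ∧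
  (∀ s : List X, τ s = some false → ∃ x : X, s ++ [x] ∈ T ∧ τ (s ++ [x]) = some true) ∧
  (∀ s : List X, ∀ x : X, τ s = some true → s ++ [x] ∈ T → τ (s ++ [x]) = some false)

/-- Any two partial winning strategies on a wellfounded tree agree on the
intersection of their domains. -/
theorem pws_agree {X : Type u} (T : Set (List X))
    (hT : IsTree T) (hwf : IsWF T)
    (τ₁ τ₂ : List X → Option Bool) (h₁ : IsPWS T τ₁) (h₂ : IsPWS T τ₂) :
    ∀ s ∈ T, (τ₁ s).isSome → (τ₂ s).isSome → τ₁ s = τ₂ s := by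
  intro s hsT hs1 hs2
  by_contra hne
  -- the "disagreement" predicate
  set P : List X → Prop := fun t => t ∈ T ∧
    ((τ₁ t = some true ∧ τ₂ t = some false) ∨ (τ₁ t = some false ∧ τ₂ t = some true))
    with hP
  have hstep : ∀ t, P t → ∃ x : X, P (t ++ [x]) := by
    intro t ht
    rcases ht with ⟨htT, h⟩
    rcases h with ⟨ht1, ht2⟩ | ⟨ht1, ht2⟩
    · obtain ⟨x, hxT, hx2⟩ := h₂.2.1 t ht2
      have hx1 := h₁.2.2 t x ht1 hxT
      exact ⟨x, hxT, Or.inr ⟨hx1, hx2⟩⟩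
    · obtain ⟨x, hxT, hx1⟩ := h₁.2.1 t ht1
      have hx2 := h₂.2.2 t x ht2 hxT
      exact ⟨x, hxT, Or.inl ⟨hx1, hx2⟩⟩
  have hPs : P s := by
    refine ⟨hsT, ?_⟩
    obtain ⟨b₁, hb₁⟩ := Option.isSome_iff_exists.mp hs1
    obtain ⟨b₂, hb₂⟩ := Option.isSome_iff_exists.mp hs2
    have hbne : b₁ ≠ b₂ := by
      intro h; apply hne; rw [hb₁, hb₂, h]
    cases b₁ <;> cases b₂ <;> simp_all
  -- build the branch
  choose f hf using hstep
  let g : ℕ → {t : List X // P t} :=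
    fun n => Nat.rec ⟨s, hPs⟩ (fun _ p => ⟨p.1 ++ [f p.1 p.2], hf p.1 p.2⟩) n
  have hgsucc : ∀ n, (g (n+1)).1 = (g n).1 ++ [f (g n).1 (g n).2] := fun n => rfl
  have hglen : ∀ n, (g n).1.length = s.length + n := by
    intro n
    induction n with
    | zero => rfl
    | succ n ih => rw [hgsucc, List.length_append, ih]; simp [Nat.add_assoc]
  have hpre : ∀ m n, m ≤ n → (g m).1 <+: (g n).1 := by
    intro m n hmn
    induction n with
    | zero => simp_all
    | succ n ih =>
      rcases Nat.lt_or_ge m (n+1) with h | h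
      · exact (ih (Nat.lt_succ_iff.mp h)).trans ⟨[f (g n).1 (g n).2], (hgsucc n).symm⟩
      · have : m = n + 1 := le_antisymm hmn h
        subst this; exact List.prefix_refl _
  have hlt : ∀ n : ℕ, n < (g (n+1)).1.length := by
    intro n; have := hglen (n+1); omega
  apply hwf
  refine ⟨fun n => (g (n+1)).1.get ⟨n, hlt n⟩, ?_⟩
  intro n
  have key : (List.ofFn fun i : Fin (n + 1) => (g (i.1+1)).1.get ⟨i.1, hlt i.1⟩)
      = (g (n+1)).1.take (n+1) := by
    apply List.ext_getElem
    · simp [hglen]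
    · intro i hi1 hi2
      simp only [List.getElem_ofFn, List.getElem_take, List.get_eq_getElem]
      simp only [List.length_ofFn] at hi1
      exact (List.IsPrefix.getElem (hpre (i+1) (n+1) (by omega)) (hlt i))
  rw [key]
  exact hT _ _ (List.take_prefix _ _) (g (n+1)).2.1
end

section
/- Let T be a wellfounded tree on a set X. The union of any family of partial winning strategies on T is a well-defined partial function (by pairwise agreement on common domains) and is itself a partial winning strategy on T. -/
universe u v

/-- Key lemma: no sequence gets value `true` from one strategy in the family and
`false` from another, on a wellfounded tree. -/
lemma pws_no_conflict {X : Type u} {ι : Type v} (T : Set (List X))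
    (hT : IsTree T) (hwf : IsWF T)
    (τ : ι → List X → Option Bool) (hτ : ∀ i, IsPWS T (τ i)) :
    ∀ s : List X, ¬ ((∃ i, τ i s = some true) ∧ (∃ j, τ j s = some false)) := by
  classical
  rintro s₀ ⟨⟨i₀, hi₀⟩, ⟨j₀, hj₀⟩⟩
  set D : List X → Prop := fun s =>
    s ∈ T ∧ (∃ i, τ i s = some true) ∧ (∃ j, τ j s = some false) with hDdef
  have hD₀ : D s₀ :=
    ⟨(hτ i₀).1 s₀ (by simp [hi₀]), ⟨i₀, hi₀⟩, ⟨j₀, hj₀⟩⟩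
  have step : ∀ s, D s → ∃ x : X, D (s ++ [x]) := by
    rintro s ⟨hsT, ⟨i, hi⟩, ⟨j, hj⟩⟩
    obtain ⟨x, hxT, hxt⟩ := (hτ j).2.1 s hj
    exact ⟨x, hxT, ⟨j, hxt⟩, ⟨i, (hτ i).2.2 s x hi hxT⟩⟩
  -- build an infinite ascending chain of sequences satisfying `D`
  let next : {s : List X // D s} → {s : List X // D s} := fun p =>
    ⟨p.1 ++ [(step p.1 p.2).choose], (step p.1 p.2).choose_spec⟩
  let g : ℕ → {s : List X // D s} := fun n => next^[n] ⟨s₀, hD₀⟩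
  have hg_succ : ∀ n, (g (n + 1)).1 = (g n).1 ++ [(step (g n).1 (g n).2).choose] := by
    intro n
    have : g (n + 1) = next (g n) := Function.iterate_succ_apply' next n _
    rw [this]
  have hg_len : ∀ n, (g n).1.length = s₀.length + n := by
    intro n
    induction n with
    | zero => rfl
    | succ n ih => rw [hg_succ n]; simp [ih]; omega
  have hg_pref : ∀ m n, m ≤ n → (g m).1 <+: (g n).1 := by
    intro m n hmn
    induction n with
    | zero => simp [Nat.le_zero.mp hmn]
    | succ n ih =>
      rcases Nat.lt_or_ge m (n + 1) with h | h
      · exact (ih (Nat.lt_succ_iff.mp h)).trans (by rw [hg_succ n]; exact List.prefix_append _ _)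
      · have : m = n + 1 := le_antisymm hmn h
        simp [this]
  haveI : Inhabited X := ⟨(step s₀ hD₀).choose⟩
  -- the infinite branch
  let x : ℕ → X := fun n => (g (n + 1)).1.getD n default
  apply hwf
  refine ⟨x, fun n => ?_⟩
  have hlt : ∀ k : ℕ, k < (g (k + 1)).1.length := by
    intro k; rw [hg_len]; omega
  have hx : ∀ (k m : ℕ) (hk : k < m) , x k = (g m).1[k]'(by rw [hg_len]; omega) := by
    intro k m hk
    have hpref := hg_pref (k + 1) m hk
    have := hpref.getElem (hlt k)
    simp only [x, List.getD_eq_getElem _ _ (hlt k)]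
    rw [← this]
  have heq : (List.ofFn fun i : Fin (n + 1) => x i) = (g (n + 1)).1.take (n + 1) := by
    apply List.ext_getElem
    · simp [hg_len]
    · intro k h1 h2
      simp only [List.getElem_ofFn, List.getElem_take]
      exact hx k (n + 1) (by simpa using h1)
  rw [heq]
  exact hT _ _ (List.take_prefix _ _) (g (n + 1)).2.1

/-- The union of any family of partial winning strategies on a wellfounded tree is a
well-defined partial function (the partial functions agree pairwise on common
domains) and is itself a partial winning strategy. -/
theorem pws_union {X : Type u} {ι : Type v} (T : Set (List X))
    (hT : IsTree T) (hwf : IsWF T)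
    (τ : ι → List X → Option Bool) (hτ : ∀ i, IsPWS T (τ i)) :
    ∃ τU : List X → Option Bool, IsPWS T τU ∧
      ∀ (s : List X) (b : Bool), (τU s = some b ↔ ∃ i, τ i s = some b) := by
  classical
  have agree : ∀ (s : List X) (i j : ι) (b b' : Bool),
      τ i s = some b → τ j s = some b' → b = b' := by
    intro s i j b b' hi hj
    by_contra hne
    cases b <;> cases b' <;> simp_all
    · exact pws_no_conflict T hT hwf τ hτ s ⟨⟨j, hj⟩, ⟨i, hi⟩⟩
    · exact pws_no_conflict T hT hwf τ hτ s ⟨⟨i, hi⟩, ⟨j, hj⟩⟩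
  refine ⟨fun s => if h : ∃ i, (τ i s).isSome then τ h.choose s else none, ?_, ?_⟩
  case refine_2 =>
    intro s b
    constructor
    · intro hb
      dsimp only at hb
      split_ifs at hb with h
      exact ⟨h.choose, hb⟩
    · rintro ⟨i, hi⟩
      have h : ∃ i, (τ i s).isSome := ⟨i, by simp [hi]⟩
      simp only [dif_pos h]
      obtain ⟨b', hb'⟩ := Option.isSome_iff_exists.mp h.choose_spec
      rw [hb', agree s h.choose i b' b hb' hi]
  case refine_1 =>
    have hiff : ∀ (s : List X) (b : Bool),
        ((fun s => if h : ∃ i, (τ i s).isSome then τ h.choose s else none) s = some b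
          ↔ ∃ i, τ i s = some b) := by
      intro s b
      constructor
      · intro hb
        dsimp only at hb
        split_ifs at hb with h
        exact ⟨h.choose, hb⟩
      · rintro ⟨i, hi⟩
        have h : ∃ i, (τ i s).isSome := ⟨i, by simp [hi]⟩
        simp only [dif_pos h]
        obtain ⟨b', hb'⟩ := Option.isSome_iff_exists.mp h.choose_spec
        rw [hb', agree s h.choose i b' b hb' hi]
    refine ⟨?_, ?_, ?_⟩
    · intro s hs
      obtain ⟨b, hb⟩ := Option.isSome_iff_exists.mp hs
      obtain ⟨i, hi⟩ := (hiff s b).mp hb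
      exact (hτ i).1 s (by simp [hi])
    · intro s hs
      obtain ⟨i, hi⟩ := (hiff s false).mp hs
      obtain ⟨x, hxT, hxt⟩ := (hτ i).2.1 s hi
      exact ⟨x, hxT, (hiff _ true).mpr ⟨i, hxt⟩⟩
    · intro s x hs hxT
      obtain ⟨i, hi⟩ := (hiff s true).mp hs
      exact (hiff _ false).mpr ⟨i, (hτ i).2.2 s x hi hxT⟩
end

section
/- For all ordinals α and β, the tree on the disjoint union β ⊕ α consisting of all sequences of the form s⌢t, where s is a finite strictly decreasing sequence of ordinals less than β (tagged in the left summand) and t is a finite strictly decreasing sequence of ordinals less than α (tagged in the right summand), is a wellfounded tree whose rank is α + β. -/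
universe u v

/-- `ρ` is the canonical ranking of `T`: at each node `s ∈ T` it takes the value
`sup_{s⌢⟨x⟩ ∈ T} (ρ(s⌢⟨x⟩) + 1)`. -/
def IsCanonicalRank {X : Type u} (T : Set (List X)) (ρ : List X → Ordinal.{v}) : Prop :=
  ∀ s ∈ T, ρ s = ⨆ x : {x : X // s ++ [x] ∈ T}, (ρ (s ++ [x.1]) + 1)

/-- The tree on the disjoint union `β ⊕ α` of all sequences `s⌢t`, where `s` is a
finite strictly decreasing sequence of ordinals `< β` tagged in the left summand and
`t` is a finite strictly decreasing sequence of ordinals `< α` tagged in the right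
summand. -/
def SumDecTree (α β : Ordinal.{u}) : Set (List (Ordinal.{u} ⊕ Ordinal.{u})) :=
  {l | ∃ s t : List Ordinal.{u},
    l = s.map Sum.inl ++ t.map Sum.inr ∧
    (∀ o ∈ s, o < β) ∧ s.Chain' (· > ·) ∧
    (∀ o ∈ t, o < α) ∧ t.Chain' (· > ·)}

/-! For the purpose of extending it, a node of the tree is determined by its last label alone,
the root counting as the label `inl β`: the tree consists of the `Step α`-chains issuing from
`inl β`. Hence the rank of a node should be `labelRank α` of its last label, where `inl o` sits
at height `α + o` and `inr o` at height `o`. The heights of the labels that may follow a given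
label fill exactly the ordinals below its own height, which is the rank recursion; and since
heights decrease along a branch, there is no infinite branch. -/

theorem Ordinal.iSup_add_one_eq_of_range_eq_Iio {ι : Type*} {g : ι → Ordinal.{v}}
    {a : Ordinal.{v}} (h : Set.range g = Set.Iio a) : ⨆ i, g i + 1 = a := by
  have hrange : Set.range (fun i => g i + 1) = Set.range fun o : Set.Iio a => Order.succ o.1 := by
    rw [Set.range_comp' (· + 1) g, h, Set.image_eq_range]
    simp only [Order.succ_eq_add_one]
  exact (congrArg sSup hrange).trans (iSup_succ a)

section ChainTree

variable {X : Type u} (R : X → X → Prop) (r : X)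

def chainTree : Set (List X) := {l | (r :: l).IsChain R}

theorem isTree_chainTree : IsTree (chainTree R r) := by
  rintro s t ⟨u, rfl⟩ ht
  exact List.IsChain.prefix ht ⟨u, rfl⟩

variable {R r}

theorem isWF_chainTree (hR : WellFounded (flip R)) : IsWF (chainTree R r) := by
  rintro ⟨x, hx⟩
  obtain ⟨n, hn⟩ := WellFounded.not_rel_apply_succ (h := ⟨hR⟩) x
  have hstep := List.isChain_iff_getElem.1 (hx (n + 1)) (n + 1) (by simp)
  simp only [List.getElem_cons_succ, List.getElem_ofFn] at hstep
  exact hn hstep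

theorem append_singleton_mem_chainTree_iff {l : List X} (hl : l ∈ chainTree R r) (x : X) :
    l ++ [x] ∈ chainTree R r ↔ R ((r :: l).getLast (List.cons_ne_nil r l)) x := by
  change (r :: l).IsChain R at hl
  change ((r :: l) ++ [x]).IsChain R ↔ _
  rw [List.isChain_append, List.getLast?_eq_some_getLast (List.cons_ne_nil r l)]
  simp [hl]

theorem isCanonicalRank_chainTree {f : X → Ordinal.{v}}
    (hf : ∀ y, f y = ⨆ x : {x // R y x}, f x + 1) :
    IsCanonicalRank (chainTree R r) fun l => f ((r :: l).getLast (List.cons_ne_nil r l)) := by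
  intro l hl
  dsimp only
  rw [hf]
  refine Equiv.iSup_congr (Equiv.subtypeEquivRight fun x =>
    (append_singleton_mem_chainTree_iff hl x).symm) fun x => ?_
  simp only [Equiv.subtypeEquivRight_apply_coe, ← List.cons_append, List.getLast_concat]

end ChainTree

theorem List.isChain_cons_iff_forall_rel_and {X : Type*} {R : X → X → Prop} [Trans R R R]
    {a : X} {l : List X} : (a :: l).IsChain R ↔ (∀ b ∈ l, R a b) ∧ l.IsChain R := by
  rw [List.isChain_iff_pairwise, List.pairwise_cons, List.isChain_iff_pairwise]

theorem List.IsChain.exists_eq_map_inl_append_map_inr {X Y : Type*}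
    {R : X ⊕ Y → X ⊕ Y → Prop} (hR : ∀ a b, ¬R (.inr a) (.inl b)) {l : List (X ⊕ Y)}
    (h : l.IsChain R) : ∃ (s : List X) (t : List Y), l = s.map Sum.inl ++ t.map Sum.inr := by
  induction l with
  | nil => exact ⟨[], [], rfl⟩
  | cons x l ih =>
    obtain ⟨s, t, rfl⟩ := ih h.tail
    cases x with
    | inl a => exact ⟨a :: s, t, rfl⟩
    | inr a =>
      cases s with
      | nil => exact ⟨[], a :: t, rfl⟩
      | cons b s => exact (hR a b (List.isChain_cons_cons.1 h).1).elim

namespace SumDecTree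

def Step (α : Ordinal.{u}) : Ordinal.{u} ⊕ Ordinal.{u} → Ordinal.{u} ⊕ Ordinal.{u} → Prop
  | .inl b, .inl o => o < b
  | .inl _, .inr o => o < α
  | .inr _, .inl _ => False
  | .inr c, .inr o => o < c

def labelRank (α : Ordinal.{u}) : Ordinal.{u} ⊕ Ordinal.{u} → Ordinal.{u}
  | .inl o => α + o
  | .inr o => o

variable {α : Ordinal.{u}}

theorem isChain_step_iff {β : Ordinal.{u}} {s t : List Ordinal.{u}} :
    (.inl β :: (s.map .inl ++ t.map .inr)).IsChain (Step α) ↔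
      (β :: s).IsChain (· > ·) ∧ (α :: t).IsChain (· > ·) := by
  induction s generalizing β with
  | nil =>
    cases t with
    | nil => simp
    | cons o t =>
      rw [List.map_nil, List.nil_append, List.map_cons, List.isChain_cons_cons,
        List.isChain_cons_map, List.isChain_cons_cons]
      simp [Step]
  | cons o s ih =>
    rw [List.map_cons, List.cons_append, List.isChain_cons_cons, ih, List.isChain_cons_cons,
      and_assoc]
    rfl

theorem eq_chainTree (α β : Ordinal.{u}) :
    SumDecTree α β = chainTree (Step α) (.inl β) := by
  ext l
  constructor
  · rintro ⟨s, t, rfl, hsβ, hs, htα, ht⟩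
    exact isChain_step_iff.2 ⟨List.isChain_cons_iff_forall_rel_and.2 ⟨hsβ, hs⟩,
      List.isChain_cons_iff_forall_rel_and.2 ⟨htα, ht⟩⟩
  · intro h
    obtain ⟨s, t, rfl⟩ := h.tail.exists_eq_map_inl_append_map_inr fun _ _ h => h
    obtain ⟨hs, ht⟩ := isChain_step_iff.1 h
    rw [List.isChain_cons_iff_forall_rel_and] at hs ht
    exact ⟨s, t, rfl, hs.1, hs.2, ht.1, ht.2⟩

theorem labelRank_lt_of_step {x y : Ordinal.{u} ⊕ Ordinal.{u}} (h : Step α x y) :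
    labelRank α y < labelRank α x := by
  match x, y, h with
  | .inl _, .inl _, h => exact add_lt_add_right h α
  | .inl _, .inr _, h => exact h.trans_le le_self_add
  | .inr _, .inr _, h => exact h

theorem range_labelRank_step (y : Ordinal.{u} ⊕ Ordinal.{u}) :
    Set.range (fun x : {x // Step α y x} => labelRank α x) = Set.Iio (labelRank α y) := by
  ext o
  simp only [Set.mem_range, Subtype.exists, Set.mem_Iio]
  constructor
  · rintro ⟨x, hx, rfl⟩
    exact labelRank_lt_of_step hx
  · intro ho
    cases y with
    | inr c => exact ⟨.inr o, ho, rfl⟩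
    | inl b =>
      rcases lt_or_ge o α with hoα | hαo
      · exact ⟨.inr o, hoα, rfl⟩
      · exact ⟨.inl (o - α), (Ordinal.sub_lt_of_le hαo).2 ho, Ordinal.add_sub_cancel_of_le hαo⟩

theorem wellFounded_flip_step : WellFounded (flip (Step α)) :=
  Subrelation.wf (fun h => labelRank_lt_of_step h) (InvImage.wf (labelRank α) Ordinal.lt_wf)

theorem labelRank_eq_iSup_step (y : Ordinal.{u} ⊕ Ordinal.{u}) :
    labelRank α y = ⨆ x : {x // Step α y x}, labelRank α x + 1 :=
  (Ordinal.iSup_add_one_eq_of_range_eq_Iio (range_labelRank_step y)).symm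

end SumDecTree

/-- For all ordinals `α`, `β`: the tree of sequences consisting of a strictly
decreasing sequence of ordinals `< β` (tagged left) followed by a strictly
decreasing sequence of ordinals `< α` (tagged right) is a wellfounded tree of rank
`α + β`. -/
theorem sumDecTree_wellfounded_rank (α β : Ordinal.{u}) :
    IsTree (SumDecTree α β) ∧ IsWF (SumDecTree α β) ∧
    ∃ ρ : List (Ordinal.{u} ⊕ Ordinal.{u}) → Ordinal.{u},
      IsCanonicalRank (SumDecTree α β) ρ ∧ ρ [] = α + β := by
  rw [SumDecTree.eq_chainTree]
  exact ⟨isTree_chainTree _ _, isWF_chainTree SumDecTree.wellFounded_flip_step,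
    _, isCanonicalRank_chainTree SumDecTree.labelRank_eq_iSup_step, rfl⟩
end
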